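/- arXiv:2305.18936 — 9 statements merged into one kernel-verified Lean document; each statement's English description precedes it below -/
import Mathlib

section
/- Let G be a finite non-cyclic group. Then the set of all maximal cyclic subgroups of G is the unique minimal cyclic cover of G; that is, the set M of maximal cyclic subgroups of G is a minimal cyclic cover, and any minimal cyclic cover of G is equal to M. -/
/-- A subgroup is cyclic (as a subgroup) if it is generated by a single element. -/
def IsCyclicSubgroup {G : Type*} [Group G] (C : Subgroup G) : Prop :=
  ∃ g : G, C = Subgroup.zpowers g

/-- A maximal cyclic subgroup: a proper cyclic subgroup `C` such that every cyclic
subgroup containing it equals `C` or the whole group. -/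
def IsMaximalCyclicSubgroup {G : Type*} [Group G] (C : Subgroup G) : Prop :=
  C ≠ ⊤ ∧ IsCyclicSubgroup C ∧
    ∀ C' : Subgroup G, IsCyclicSubgroup C' → C ≤ C' → C' = C ∨ C' = ⊤

/-- A set of cyclic subgroups covering `G` such that no proper subset covers `G`. -/
def IsMinimalCyclicCover {G : Type*} [Group G] (S : Set (Subgroup G)) : Prop :=
  (∀ C ∈ S, IsCyclicSubgroup C) ∧
  (∀ g : G, ∃ C ∈ S, g ∈ C) ∧
  (∀ T : Set (Subgroup G), T ⊂ S → ¬ (∀ g : G, ∃ C ∈ T, g ∈ C))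

section aux
variable {G : Type*} [Group G] [Finite G]

omit [Finite G] in
lemma cyclic_ne_top (h : ¬ IsCyclic G) {C : Subgroup G} (hC : IsCyclicSubgroup C) : C ≠ ⊤ := by
  rintro rfl
  obtain ⟨g, hg⟩ := hC
  exact h ⟨⟨g, fun x => by rw [← Subgroup.mem_zpowers_iff, ← hg]; trivial⟩⟩

lemma exists_maximal_cyclic (h : ¬ IsCyclic G) {C : Subgroup G} (hC : IsCyclicSubgroup C) :
    ∃ D, IsMaximalCyclicSubgroup D ∧ C ≤ D := by
  obtain ⟨D, hCD, hD⟩ := Finite.exists_le_maximal (p := fun D : Subgroup G => IsCyclicSubgroup D) hC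
  refine ⟨D, ⟨cyclic_ne_top h hD.1, hD.1, fun C' hC' hDC' => ?_⟩, hCD⟩
  exact Or.inl (le_antisymm (hD.2 hC' hDC') hDC')

end aux

/-- For a finite non-cyclic group, the set of maximal cyclic subgroups is the unique
minimal cyclic cover. -/
theorem maximalCyclic_unique_minimal_cyclic_cover
    {G : Type*} [Group G] [Finite G] (h : ¬ IsCyclic G) :
    IsMinimalCyclicCover {C : Subgroup G | IsMaximalCyclicSubgroup C} ∧
      ∀ S : Set (Subgroup G), IsMinimalCyclicCover S →
        S = {C : Subgroup G | IsMaximalCyclicSubgroup C} := by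
  have hMS : ∀ (S : Set (Subgroup G)), (∀ C ∈ S, IsCyclicSubgroup C) →
      (∀ g : G, ∃ C ∈ S, g ∈ C) →
      ∀ C : Subgroup G, IsMaximalCyclicSubgroup C → C ∈ S := by
    intro S hScyc hScov C hC
    obtain ⟨g, hg⟩ := hC.2.1
    obtain ⟨C', hC'S, hgC'⟩ := hScov g
    have hle : C ≤ C' := hg ▸ (Subgroup.zpowers_le).2 hgC'
    rcases hC.2.2 C' (hScyc C' hC'S) hle with rfl | rfl
    · exact hC'S
    · exact absurd rfl (cyclic_ne_top h (hScyc ⊤ hC'S))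
  constructor
  · refine ⟨fun C hC => hC.2.1, fun g => ?_, fun T hT hTcov => ?_⟩
    · obtain ⟨D, hD, hle⟩ := exists_maximal_cyclic h ⟨g, rfl⟩
      exact ⟨D, hD, hle (Subgroup.mem_zpowers g)⟩
    · obtain ⟨C, hCM, hCT⟩ := Set.exists_of_ssubset hT
      obtain ⟨g, hg⟩ := hCM.2.1
      obtain ⟨C', hC'T, hgC'⟩ := hTcov g
      have hle : C ≤ C' := hg ▸ (Subgroup.zpowers_le).2 hgC'
      rcases hCM.2.2 C' ((hT.1 hC'T).2.1) hle with rfl | rfl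
      · exact hCT hC'T
      · exact (hT.1 hC'T).1 rfl
  · rintro S ⟨hScyc, hScov, hSmin⟩
    apply Set.eq_of_subset_of_subset
    · intro C hCS
      by_contra hCM
      obtain ⟨D, hD, hle⟩ := exists_maximal_cyclic h (hScyc C hCS)
      have hDS : D ∈ S := hMS S hScyc hScov D hD
      have hne : C ≠ D := by rintro rfl; exact hCM hD
      refine hSmin (S \ {C}) ⟨Set.diff_subset, fun hsub => ?_⟩ ?_
      · exact ((hsub hCS).2 rfl)
      · intro g
        obtain ⟨C'', hC''S, hgC''⟩ := hScov g
        by_cases hcc : C'' = C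
        · exact ⟨D, ⟨hDS, hne ∘ Eq.symm⟩, hle (hcc ▸ hgC'')⟩
        · exact ⟨C'', ⟨hC''S, hcc⟩, hgC''⟩
    · exact fun C hC => hMS S hScyc hScov C hC
end

section
/- Let G be a finite group, Γ = Pow(G), and let v ∈ G be such that the order o(v) is not a prime power. Suppose x ∈ N_Γ[v] has o(x) > o(v) and x is a closed-twin of v in Γ_v = Γ[N_Γ[v]]. Then the degree of x in Γ is strictly greater than the degree of v in Γ. -/
/-- The power graph of a group `G`: distinct `x` and `y` are adjacent iff
`x ∈ ⟨y⟩` or `y ∈ ⟨x⟩`. -/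
def powGraph (G : Type*) [Group G] : SimpleGraph G where
  Adj x y := x ≠ y ∧ (x ∈ Subgroup.zpowers y ∨ y ∈ Subgroup.zpowers x)
  symm := by
    constructor
    rintro x y ⟨hne, h⟩
    exact ⟨hne.symm, h.symm⟩
  loopless := by
    constructor
    rintro x ⟨hne, -⟩
    exact hne rfl

/-- The closed neighborhood of a vertex in a simple graph. -/
def closedNbhd {V : Type*} (X : SimpleGraph V) (v : V) : Set V :=
  insert v (X.neighborSet v)

theorem self_mem_closedNbhd {V : Type*} (X : SimpleGraph V) (v : V) :
    v ∈ closedNbhd X v := Set.mem_insert v _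

/-- `Γ_v`: the subgraph of the power graph induced on the closed neighborhood of `v`. -/
def powLocal (G : Type*) [Group G] (v : G) :
    SimpleGraph (closedNbhd (powGraph G) v) :=
  SimpleGraph.induce (closedNbhd (powGraph G) v) (powGraph G)

/-! Since `o(v) < o(x)`, the edge `vx` forces `v ∈ ⟨x⟩`, so `o(v)` is a proper divisor of `o(x)` and
some prime power `p^k` divides `o(x)` but not `o(v)`. The element `y ∈ ⟨x⟩` of order `p^k` is a
neighbour of `x` outside `N[v]`: `v ∉ ⟨y⟩` because `o(v)` is not a prime power, and `y ∉ ⟨v⟩`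
because `p^k ∤ o(v)`. The twin condition gives `N(v) \ {x} ⊆ N(x)`, and `v ∈ N(x)`, so
`N(x)` contains the `deg v` vertices `{v} ∪ (N(v) \ {x})` and also `y`. -/

theorem SimpleGraph.neighborSet_diff_singleton_subset_of_closedNbhd_induce_eq {V : Type*}
    (X : SimpleGraph V) {v x : V} (hx : x ∈ closedNbhd X v)
    (htwin : closedNbhd (X.induce (closedNbhd X v)) ⟨x, hx⟩ =
      closedNbhd (X.induce (closedNbhd X v)) ⟨v, self_mem_closedNbhd X v⟩) :
    X.neighborSet v \ {x} ⊆ X.neighborSet x := by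
  rintro z ⟨hvz, hzx⟩
  have hz : (⟨z, Set.mem_insert_of_mem v hvz⟩ : closedNbhd X v) ∈
      closedNbhd (X.induce (closedNbhd X v)) ⟨v, self_mem_closedNbhd X v⟩ :=
    Set.mem_insert_of_mem _ hvz
  rw [← htwin] at hz
  rcases hz with hzx' | hxz
  · exact absurd (congrArg Subtype.val hzx') hzx
  · exact hxz

theorem SimpleGraph.ncard_neighborSet_lt_of_diff_singleton_subset {V : Type*} [Finite V]
    (X : SimpleGraph V) {v x : V} (hvx : X.Adj v x)
    (hsub : X.neighborSet v \ {x} ⊆ X.neighborSet x)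
    (hnew : ¬ X.neighborSet x ⊆ closedNbhd X v) :
    (X.neighborSet v).ncard < (X.neighborSet x).ncard := by
  have hv : v ∉ X.neighborSet v \ {x} := fun h => X.irrefl h.1
  have hins : insert v (X.neighborSet v \ {x}) ⊂ X.neighborSet x :=
    ⟨Set.insert_subset hvx.symm hsub,
      fun hsup => hnew (hsup.trans (Set.insert_subset_insert Set.sdiff_subset))⟩
  calc (X.neighborSet v).ncard
      = (X.neighborSet v \ {x}).ncard + 1 := (Set.ncard_sdiff_singleton_add_one hvx).symm
    _ = (insert v (X.neighborSet v \ {x})).ncard := (Set.ncard_insert_of_notMem hv).symm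
    _ < (X.neighborSet x).ncard := Set.ncard_lt_ncard hins

theorem exists_mem_zpowers_orderOf_eq_prime_pow_not_dvd {G : Type*} [Group G] {x : G} {m : ℕ}
    (hx : orderOf x ≠ 0) (hm : ¬ orderOf x ∣ m) :
    ∃ y ∈ Subgroup.zpowers x, ∃ p k : ℕ, p.Prime ∧ orderOf y = p ^ k ∧ ¬ orderOf y ∣ m := by
  obtain ⟨p, k, hp, hpx, hpm⟩ : ∃ p k : ℕ, p.Prime ∧ p ^ k ∣ orderOf x ∧ ¬ p ^ k ∣ m := by
    simpa [Nat.dvd_iff_prime_pow_dvd_dvd m (orderOf x)] using hm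
  refine ⟨x ^ (orderOf x / p ^ k), Subgroup.npow_mem_zpowers x _, p, k, hp, ?_, ?_⟩ <;>
    rw [orderOf_pow_orderOf_div hx hpx]
  exact hpm

theorem mem_zpowers_of_powGraph_adj_of_orderOf_lt {G : Type*} [Group G] {v x : G}
    (hv : IsOfFinOrder v) (hvx : (powGraph G).Adj v x) (hord : orderOf v < orderOf x) :
    v ∈ Subgroup.zpowers x := by
  refine hvx.2.resolve_right fun hxv => hord.not_ge ?_
  exact Nat.le_of_dvd hv.orderOf_pos (orderOf_dvd_of_mem_zpowers hxv)

theorem notMem_closedNbhd_powGraph_of_orderOf_eq_prime_pow {G : Type*} [Group G] {v y : G}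
    {p k : ℕ} (hv : ¬ ∃ p i : ℕ, p.Prime ∧ orderOf v = p ^ i) (hp : p.Prime)
    (hy : orderOf y = p ^ k) (hyv : ¬ orderOf y ∣ orderOf v) :
    y ∉ closedNbhd (powGraph G) v := by
  have hynv : y ∉ Subgroup.zpowers v := fun h => hyv (orderOf_dvd_of_mem_zpowers h)
  have hvny : v ∉ Subgroup.zpowers y := fun h => by
    obtain ⟨i, -, hi⟩ := (Nat.dvd_prime_pow hp).mp (hy ▸ orderOf_dvd_of_mem_zpowers h)
    exact hv ⟨p, i, hp, hi⟩
  rintro (rfl | ⟨-, hvy | hyv⟩)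
  · exact hynv (Subgroup.mem_zpowers y)
  · exact hvny hvy
  · exact hynv hyv

/-- If `o(v)` is not a prime power, `x ∈ N_Γ[v]` has strictly larger order than `v`,
and `x` is a closed-twin of `v` in `Γ_v`, then `deg_Γ(x) > deg_Γ(v)`. -/
theorem twin_of_larger_order_has_larger_degree
    {G : Type*} [Group G] [Finite G] (v x : G)
    (hnpp : ¬ ∃ p i : ℕ, p.Prime ∧ orderOf v = p ^ i)
    (hx : x ∈ closedNbhd (powGraph G) v)
    (hord : orderOf v < orderOf x)
    (htwin : closedNbhd (powLocal G v) ⟨x, hx⟩ =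
      closedNbhd (powLocal G v) ⟨v, self_mem_closedNbhd _ v⟩) :
    ((powGraph G).neighborSet v).ncard < ((powGraph G).neighborSet x).ncard := by
  have hvx : (powGraph G).Adj v x :=
    hx.resolve_left fun h => hord.ne (congrArg orderOf h).symm
  have hv_mem : v ∈ Subgroup.zpowers x :=
    mem_zpowers_of_powGraph_adj_of_orderOf_lt (isOfFinOrder_of_finite v) hvx hord
  have hx_ndvd : ¬ orderOf x ∣ orderOf v :=
    fun h => hord.not_ge (Nat.le_of_dvd (orderOf_pos v) h)
  obtain ⟨y, hy_mem, p, k, hp, hoy, hy_ndvd⟩ :=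
    exists_mem_zpowers_orderOf_eq_prime_pow_not_dvd (orderOf_pos x).ne' hx_ndvd
  have hy : y ∉ closedNbhd (powGraph G) v :=
    notMem_closedNbhd_powGraph_of_orderOf_eq_prime_pow hnpp hp hoy hy_ndvd
  have hyx : y ∈ (powGraph G).neighborSet x := ⟨fun h => hy (h ▸ hx), Or.inr hy_mem⟩
  exact (powGraph G).ncard_neighborSet_lt_of_diff_singleton_subset hvx
    ((powGraph G).neighborSet_diff_singleton_subset_of_closedNbhd_induce_eq hx htwin)
    fun hsub => hy (hsub hyx)
end

section
/- Let G be a finite group, Γ = Pow(G), and let v ∈ G be a CC-generator whose order o(v) is not a prime power. Let Γ_v = Γ[N_Γ[v]] and let u ∈ N_Γ[v]. If u = e (the identity) or ⟨u⟩ = ⟨v⟩, then the set of closed-twins of u in Γ_v is exactly {e} together with the generators of ⟨v⟩, i.e. {w ∈ N_Γ[v] : w = e or ⟨w⟩ = ⟨v⟩}. Otherwise, the set of closed-twins of u in Γ_v is exactly the set of generators of ⟨u⟩, i.e. {w ∈ N_Γ[v] : ⟨w⟩ = ⟨u⟩}. -/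
/-- `v` is a CC-generator: `⟨v⟩` is not properly contained in any cyclic subgroup,
i.e. `v ∈ ⟨g⟩` implies `⟨g⟩ = ⟨v⟩`. -/
def IsCCGenerator {G : Type*} [Group G] (v : G) : Prop :=
  ∀ g : G, v ∈ Subgroup.zpowers g → Subgroup.zpowers g = Subgroup.zpowers v

/-!
A CC-generator `v` is adjacent in `Pow(G)` exactly to the elements of `⟨v⟩`, so `Γ_v` is the
power graph of the cyclic group `⟨v⟩`, in which `x ∈ ⟨y⟩` iff `o(x) ∣ o(y)`. Hence `u` and `w`
are closed twins in `Γ_v` iff `o(u)` and `o(w)` are comparable, under divisibility, with the same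
divisors of `n = o(v)`. When `n` is not a prime power, every divisor `e ∉ {1, n}` is incomparable
with some divisor `m`. If `e` and `d` have the same comparable divisors, then `lcm(m, e)` is
comparable with `d` and `gcd(m, d)` with `e`, which forces `d ∣ lcm(m, e)` and `gcd(m, d) ∣ e`,
hence `d ∣ e` by distributivity of the divisor lattice; symmetrically `e ∣ d`.
-/

open Relation

namespace Nat

lemma exists_prime_factorization_lt_of_not_dvd {d e : ℕ} (hd : d ≠ 0) (he : e ≠ 0)
    (h : ¬ d ∣ e) : ∃ p, p.Prime ∧ e.factorization p < d.factorization p := by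
  rw [← factorization_le_iff_dvd hd he, Finsupp.le_def] at h
  push Not at h
  obtain ⟨p, hp⟩ := h
  exact ⟨p, prime_of_mem_primeFactors (support_factorization d ▸
    Finsupp.mem_support_iff.2 (by omega)), hp⟩

lemma exists_prime_dvd_ne_of_not_prime_pow {n p : ℕ} (hn : n ≠ 0) (hp : p.Prime)
    (hnpp : ¬ ∃ q i : ℕ, q.Prime ∧ n = q ^ i) : ∃ q, q.Prime ∧ q ∣ n ∧ q ≠ p := by
  by_contra! h
  exact hnpp ⟨p, _, hp, eq_prime_pow_of_unique_prime_dvd hn fun hq hqn => h _ hq hqn⟩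

lemma dvd_of_dvd_lcm_of_gcd_dvd {d e m : ℕ} (hd : d ≠ 0) (he : e ≠ 0) (hm : m ≠ 0)
    (hlcm : d ∣ m.lcm e) (hgcd : m.gcd d ∣ e) : d ∣ e := by
  rw [← factorization_le_iff_dvd hd (lcm_ne_zero hm he), factorization_lcm hm he] at hlcm
  rw [← factorization_le_iff_dvd (gcd_ne_zero_left hm) he, factorization_gcd hm hd] at hgcd
  rw [← factorization_le_iff_dvd hd he, Finsupp.le_def]
  intro p
  have h1 := hlcm p
  have h2 := hgcd p
  simp only [Finsupp.sup_apply, Finsupp.inf_apply] at h1 h2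
  omega

lemma exists_dvd_not_symmGen_dvd {n d : ℕ} (hn : n ≠ 0)
    (hnpp : ¬ ∃ q i : ℕ, q.Prime ∧ n = q ^ i) (hdn : d ∣ n) (hd1 : d ≠ 1) (hdn' : d ≠ n) :
    ∃ m, m ∣ n ∧ ¬ SymmGen (· ∣ ·) m d := by
  have hd0 : d ≠ 0 := ne_zero_of_dvd_ne_zero hn hdn
  obtain ⟨p, hp, hlt⟩ := exists_prime_factorization_lt_of_not_dvd hn hd0
    fun h => hdn' (dvd_antisymm hdn h)
  by_cases hq : ∃ q, q.Prime ∧ q ∣ d ∧ q ≠ p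
  · obtain ⟨q, hq, hqd, hqp⟩ := hq
    refine ⟨p ^ n.factorization p, ordProj_dvd n p, ?_⟩
    rintro (h | h)
    · rw [hp.pow_dvd_iff_le_factorization hd0] at h
      omega
    · exact hqp ((prime_dvd_prime_iff_eq hq hp).1 (hq.dvd_of_dvd_pow (hqd.trans h)))
  · push Not at hq
    obtain ⟨q, hq', hqn, hqp⟩ := exists_prime_dvd_ne_of_not_prime_pow hn hp hnpp
    refine ⟨q, hqn, ?_⟩
    rintro (h | h)
    · exact hqp (hq q hq' h)
    · rcases hq'.eq_one_or_self_of_dvd d h with rfl | rfl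
      · exact hd1 rfl
      · exact hqp (hq _ hq' dvd_rfl)

lemma forall_symmGen_dvd_iff {n e : ℕ} (hn : n ≠ 0)
    (hnpp : ¬ ∃ q i : ℕ, q.Prime ∧ n = q ^ i) (hen : e ∣ n) :
    (∀ m, m ∣ n → SymmGen (· ∣ ·) m e) ↔ e = 1 ∨ e = n := by
  refine ⟨fun h => ?_, ?_⟩
  · by_contra! he
    obtain ⟨m, hmn, hm⟩ := exists_dvd_not_symmGen_dvd hn hnpp hen he.1 he.2
    exact hm (h m hmn)
  · rintro (rfl | rfl) m hmn
    exacts [.of_rel_symm (one_dvd m), .of_rel hmn]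

lemma dvd_of_forall_symmGen_dvd_iff {n e d m : ℕ} (hn : n ≠ 0) (hen : e ∣ n) (hdn : d ∣ n)
    (hmn : m ∣ n) (hme : ¬ SymmGen (· ∣ ·) m e)
    (h : ∀ k, k ∣ n → (SymmGen (· ∣ ·) k e ↔ SymmGen (· ∣ ·) k d)) : d ∣ e := by
  have hmd := (h m hmn).not.1 hme
  have hlcm : d ∣ m.lcm e := by
    rcases (h _ (Nat.lcm_dvd hmn hen)).1 (.of_rel_symm (dvd_lcm_right m e)) with hd | hd
    · exact absurd (.of_rel ((dvd_lcm_left m e).trans hd)) hmd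
    · exact hd
  have hgcd : m.gcd d ∣ e := by
    rcases (h _ ((gcd_dvd_left m d).trans hmn)).2 (.of_rel (gcd_dvd_right m d)) with he | he
    · exact he
    · exact absurd (.of_rel_symm (he.trans (gcd_dvd_left m d))) hme
  exact dvd_of_dvd_lcm_of_gcd_dvd (ne_zero_of_dvd_ne_zero hn hdn)
    (ne_zero_of_dvd_ne_zero hn hen) (ne_zero_of_dvd_ne_zero hn hmn) hlcm hgcd

theorem forall_symmGen_dvd_iff_iff {n e d : ℕ} (hn : n ≠ 0)
    (hnpp : ¬ ∃ q i : ℕ, q.Prime ∧ n = q ^ i) (hen : e ∣ n) (hdn : d ∣ n) :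
    (∀ m, m ∣ n → (SymmGen (· ∣ ·) m e ↔ SymmGen (· ∣ ·) m d)) ↔
      e = d ∨ ((e = 1 ∨ e = n) ∧ (d = 1 ∨ d = n)) := by
  constructor
  · intro h
    by_cases he : e = 1 ∨ e = n
    · refine .inr ⟨he, (forall_symmGen_dvd_iff hn hnpp hdn).1 fun m hmn => ?_⟩
      exact (h m hmn).1 ((forall_symmGen_dvd_iff hn hnpp hen).2 he m hmn)
    · push Not at he
      obtain ⟨m, hmn, hme⟩ := exists_dvd_not_symmGen_dvd hn hnpp hen he.1 he.2
      have hmd := (h m hmn).not.1 hme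
      exact .inl (dvd_antisymm (dvd_of_forall_symmGen_dvd_iff hn hdn hen hmn hmd
        fun k hk => (h k hk).symm) (dvd_of_forall_symmGen_dvd_iff hn hen hdn hmn hme h))
  · rintro (rfl | ⟨he, hd⟩) m hmn
    · rfl
    · simp only [(forall_symmGen_dvd_iff hn hnpp hen).2 he m hmn,
        (forall_symmGen_dvd_iff hn hnpp hdn).2 hd m hmn]

end Nat

lemma closedNbhd_induce {V : Type*} (X : SimpleGraph V) (s : Set V) (x : s) :
    closedNbhd (X.induce s) x = Subtype.val ⁻¹' closedNbhd X x := by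
  ext y
  simp [closedNbhd, Subtype.ext_iff]

section Group

variable {G : Type*} [Group G]

open Subgroup

lemma mem_closedNbhd_powGraph {x y : G} :
    x ∈ closedNbhd (powGraph G) y ↔ SymmGen (fun a b => a ∈ zpowers b) x y := by
  simp only [closedNbhd, Set.mem_insert_iff, SimpleGraph.mem_neighborSet, powGraph, SymmGen]
  by_cases hxy : x = y
  · subst hxy
    simp [mem_zpowers]
  · simp [hxy, Ne.symm hxy, or_comm]

lemma closedNbhd_powGraph_eq_zpowers {v : G} (hv : IsCCGenerator v) :
    closedNbhd (powGraph G) v = zpowers v := by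
  ext x
  rw [mem_closedNbhd_powGraph, SetLike.mem_coe]
  refine ⟨?_, fun h => .inl h⟩
  rintro (h | h)
  · exact h
  · exact hv x h ▸ mem_zpowers x

lemma pow_gcd_orderOf_mem_zpowers_pow (v : G) (b : ℕ) :
    v ^ (orderOf v).gcd b ∈ zpowers (v ^ b) := by
  refine ⟨Nat.gcdB (orderOf v) b, ?_⟩
  dsimp only
  rw [← zpow_natCast, ← zpow_natCast, ← zpow_mul, Nat.gcd_eq_gcd_ab, zpow_add,
    zpow_mul v (orderOf v : ℤ), zpow_natCast, pow_orderOf_eq_one, one_zpow, one_mul]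

lemma mem_zpowers_iff_orderOf_dvd {v x y : G} (hv : IsOfFinOrder v) (hx : x ∈ zpowers v)
    (hy : y ∈ zpowers v) : x ∈ zpowers y ↔ orderOf x ∣ orderOf y := by
  refine ⟨orderOf_dvd_of_mem_zpowers, fun h => ?_⟩
  obtain ⟨a, rfl⟩ := Submonoid.mem_powers_iff _ _ |>.1 (hv.mem_powers_iff_mem_zpowers.2 hx)
  obtain ⟨b, rfl⟩ := Submonoid.mem_powers_iff _ _ |>.1 (hv.mem_powers_iff_mem_zpowers.2 hy)
  set g := (orderOf v).gcd b
  have hg : g ∣ a := by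
    rw [orderOf_dvd_iff_pow_eq_one, ← pow_mul, hv.orderOf_pow, ← orderOf_dvd_iff_pow_eq_one] at h
    have hq : 0 < orderOf v / g :=
      Nat.div_pos (Nat.le_of_dvd hv.orderOf_pos (Nat.gcd_dvd_left _ _))
        (Nat.gcd_pos_of_pos_left _ hv.orderOf_pos)
    refine Nat.dvd_of_mul_dvd_mul_right hq ?_
    rwa [Nat.mul_div_cancel' (Nat.gcd_dvd_left _ _)]
  obtain ⟨c, rfl⟩ := hg
  rw [pow_mul]
  exact zpowers_le.2 (pow_gcd_orderOf_mem_zpowers_pow v b) (pow_mem (mem_zpowers _) c)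

lemma zpowers_eq_zpowers_iff_orderOf_eq {v x y : G} (hv : IsOfFinOrder v) (hx : x ∈ zpowers v)
    (hy : y ∈ zpowers v) : zpowers x = zpowers y ↔ orderOf x = orderOf y := by
  rw [le_antisymm_iff, zpowers_le, zpowers_le, mem_zpowers_iff_orderOf_dvd hv hx hy,
    mem_zpowers_iff_orderOf_dvd hv hy hx, dvd_dvd_iff_associated, associated_iff_eq]

lemma closedNbhd_inter_zpowers_eq_iff {v u w : G} (hv : IsOfFinOrder v) (hu : u ∈ zpowers v)
    (hw : w ∈ zpowers v) :
    (zpowers v : Set G) ∩ closedNbhd (powGraph G) w =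
        (zpowers v : Set G) ∩ closedNbhd (powGraph G) u ↔
      ∀ m, m ∣ orderOf v →
        (SymmGen (· ∣ ·) m (orderOf w) ↔ SymmGen (· ∣ ·) m (orderOf u)) := by
  have key : ∀ {x y}, x ∈ zpowers v → y ∈ zpowers v →
      (x ∈ closedNbhd (powGraph G) y ↔ SymmGen (· ∣ ·) (orderOf x) (orderOf y)) :=
    fun hx hy => by
      rw [mem_closedNbhd_powGraph, SymmGen, SymmGen, mem_zpowers_iff_orderOf_dvd hv hx hy,
        mem_zpowers_iff_orderOf_dvd hv hy hx]
  simp only [Set.ext_iff, Set.mem_inter_iff, SetLike.mem_coe]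
  constructor
  · intro h m hm
    have hx := pow_mem (mem_zpowers v) (orderOf v / m)
    rw [← orderOf_pow_orderOf_div hv.orderOf_pos.ne' hm, ← key hx hw, ← key hx hu]
    simpa [hx] using h (v ^ (orderOf v / m))
  · intro h x
    by_cases hx : x ∈ zpowers v
    · simp only [hx, true_and, key hx hw, key hx hu]
      exact h _ (orderOf_dvd_of_mem_zpowers hx)
    · simp [hx]

end Group

/-- Let `v` be a CC-generator whose order is not a prime power and `u ∈ N_Γ[v]`.
If `u` is the identity or a generator of `⟨v⟩`, the closed-twins of `u` in `Γ_v` are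
exactly the identity together with the generators of `⟨v⟩`; otherwise they are exactly
the generators of `⟨u⟩`. -/
theorem closed_twins_in_powLocal_of_ccGenerator
    {G : Type*} [Group G] [Finite G] (v u : G)
    (hcc : IsCCGenerator v)
    (hnpp : ¬ ∃ p i : ℕ, p.Prime ∧ orderOf v = p ^ i)
    (hu : u ∈ closedNbhd (powGraph G) v) :
    ∀ w, ∀ hw : w ∈ closedNbhd (powGraph G) v,
      ((u = 1 ∨ Subgroup.zpowers u = Subgroup.zpowers v) →
        (closedNbhd (powLocal G v) ⟨w, hw⟩ = closedNbhd (powLocal G v) ⟨u, hu⟩ ↔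
          (w = 1 ∨ Subgroup.zpowers w = Subgroup.zpowers v))) ∧
      (¬ (u = 1 ∨ Subgroup.zpowers u = Subgroup.zpowers v) →
        (closedNbhd (powLocal G v) ⟨w, hw⟩ = closedNbhd (powLocal G v) ⟨u, hu⟩ ↔
          Subgroup.zpowers w = Subgroup.zpowers u)) := by
  intro w hw
  have hv : IsOfFinOrder v := isOfFinOrder_of_finite v
  have hN := closedNbhd_powGraph_eq_zpowers hcc
  have huv : u ∈ Subgroup.zpowers v := by rwa [hN] at hu
  have hwv : w ∈ Subgroup.zpowers v := by rwa [hN] at hw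
  have htwin : closedNbhd (powLocal G v) ⟨w, hw⟩ = closedNbhd (powLocal G v) ⟨u, hu⟩ ↔
      orderOf w = orderOf u ∨ ((orderOf w = 1 ∨ orderOf w = orderOf v) ∧
        (orderOf u = 1 ∨ orderOf u = orderOf v)) := by
    rw [powLocal, closedNbhd_induce, closedNbhd_induce, Subtype.preimage_coe_eq_preimage_coe_iff]
    dsimp only
    rw [hN, closedNbhd_inter_zpowers_eq_iff hv huv hwv, Nat.forall_symmGen_dvd_iff_iff
        hv.orderOf_pos.ne' hnpp (orderOf_dvd_of_mem_zpowers hwv) (orderOf_dvd_of_mem_zpowers huv)]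
  have hgen : ∀ x ∈ Subgroup.zpowers v,
      (x = 1 ∨ Subgroup.zpowers x = Subgroup.zpowers v) ↔
        (orderOf x = 1 ∨ orderOf x = orderOf v) :=
    fun x hx => by
      rw [orderOf_eq_one_iff, zpowers_eq_zpowers_iff_orderOf_eq hv hx (Subgroup.mem_zpowers v)]
  rw [htwin, hgen u huv, hgen w hwv, zpowers_eq_zpowers_iff_orderOf_eq hv hwv huv]
  grind
end

section
/- Let G be a finite group, Γ = Pow(G), and let v ∈ G be a CC-generator whose order o(v) is not a prime power. Then Γ_v = Γ[N_Γ[v]] has at most two closed-twin-classes of size greater than or equal to φ(o(v)). -/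
/-!
Since `v` is a CC-generator, `N[v] = ⟨v⟩` is cyclic of order `n = o(v)`, and two of its
elements are adjacent in `Γ_v` iff their orders are comparable under divisibility. So elements
of order `1` or `n` are adjacent to everything and form one twin class. As `n` is not a prime
power, an order `d` with `1 < d < n` is determined by the set of divisors of `n` comparable with
it, so the twin class of an element of order `d` consists of the `φ(d)` elements of order `d`.
Finally `φ(d) φ(n/d) ≤ φ(n)`, so `φ(n) ≤ φ(d)` for a proper divisor `d` forces `n = 2d`.
-/

open Subgroup
open scoped Nat

namespace Nat

theorem exists_dvd_not_iff_of_dvd_of_ne {n d e : ℕ} (hn : ¬IsPrimePow n) (hd : 1 < d)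
    (hde : d ∣ e) (hen : e ∣ n) (hne : d ≠ e) :
    ∃ m, m ∣ n ∧ ¬((m ∣ d ∨ d ∣ m) ↔ (m ∣ e ∨ e ∣ m)) := by
  obtain ⟨p, k, hp, hpe, hpd⟩ : ∃ p k, p.Prime ∧ p ^ k ∣ e ∧ ¬p ^ k ∣ d := by
    have : ¬e ∣ d := fun h => hne (Nat.dvd_antisymm hde h)
    simpa [Nat.dvd_iff_prime_pow_dvd_dvd d e] using this
  -- `p ^ k` separates `d` from `e` unless `d` is a power of `p`; then a second prime `r ∣ n`
  -- separates them, either itself or through `d * r`.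
  by_cases hdp : d ∣ p ^ k
  swap
  · exact ⟨p ^ k, hpe.trans hen, by tauto⟩
  obtain ⟨i, -, rfl⟩ := (Nat.dvd_prime_pow hp).1 hdp
  have hpd' : p ∣ p ^ i := dvd_pow_self p (by rintro rfl; simp at hd)
  obtain ⟨r, hr, hrn, hrp⟩ : ∃ r, r.Prime ∧ r ∣ n ∧ r ≠ p := by
    by_contra! h
    exact hn (isPrimePow_iff_unique_prime_dvd.2
      ⟨p, ⟨hp, hpd'.trans (hde.trans hen)⟩, fun r hr => h r hr.1 hr.2⟩)
  have hrd : ¬r ∣ p ^ i := fun h => hrp ((prime_dvd_prime_iff_eq hr hp).1 (hr.dvd_of_dvd_pow h))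
  have hdr : ¬p ^ i ∣ r := fun h => hrp ((prime_dvd_prime_iff_eq hp hr).1 (hpd'.trans h)).symm
  by_cases hre : r ∣ e
  · exact ⟨r, hrn, by tauto⟩
  · have hmul : p ^ i * r ∣ n :=
      Nat.Coprime.mul_dvd_of_dvd_of_dvd ((hr.coprime_iff_not_dvd.2 hrd).symm) (hde.trans hen) hrn
    have h1 : ¬p ^ i * r ∣ e := fun h => hre ((dvd_mul_left r _).trans h)
    have h2 : ¬e ∣ p ^ i * r := fun h =>
      hne (Nat.dvd_antisymm hde ((hr.coprime_iff_not_dvd.2 hre).symm.dvd_of_dvd_mul_right h))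
    exact ⟨p ^ i * r, hmul, by simp [h1, h2]⟩

theorem eq_of_forall_dvd_iff {n d e : ℕ} (hn : ¬IsPrimePow n) (hn0 : n ≠ 0) (hdn : d ∣ n)
    (hen : e ∣ n) (hd1 : d ≠ 1) (hdn' : d ≠ n)
    (h : ∀ m, m ∣ n → ((m ∣ d ∨ d ∣ m) ↔ (m ∣ e ∨ e ∣ m))) : d = e := by
  have hd : 1 < d := by
    have := Nat.pos_of_dvd_of_pos hdn (Nat.pos_of_ne_zero hn0)
    omega
  by_contra hne
  rcases (h e hen).2 (Or.inl dvd_rfl) with hed | hde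
  · obtain rfl | he := eq_or_ne e 1
    -- `1`, like `n`, is comparable with every divisor of `n`
    · obtain ⟨m, hm, hm'⟩ := exists_dvd_not_iff_of_dvd_of_ne hn hd hdn dvd_rfl hdn'
      exact hm' (by simp [h m hm, hm])
    · have he0 : e ≠ 0 := by rintro rfl; exact hn0 (Nat.eq_zero_of_zero_dvd hen)
      obtain ⟨m, hm, hm'⟩ :=
        exists_dvd_not_iff_of_dvd_of_ne hn (by omega) hed hdn (Ne.symm hne)
      exact hm' (h m hm).symm
  · obtain ⟨m, hm, hm'⟩ := exists_dvd_not_iff_of_dvd_of_ne hn hd hde hen hne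
    exact hm' (h m hm)

theorem eq_two_mul_of_totient_le {n d : ℕ} (hdn : d ∣ n) (hlt : d < n) (h : φ n ≤ φ d) :
    n = 2 * d := by
  obtain ⟨k, rfl⟩ := hdn
  have hd : 0 < φ d := Nat.totient_pos.2 (Nat.pos_of_ne_zero (by rintro rfl; simp at hlt))
  have hk : φ k ≤ 1 :=
    le_of_mul_le_mul_left ((totient_super_multiplicative d k).trans (h.trans (mul_one _).ge)) hd
  rcases Nat.le_one_iff_eq_zero_or_eq_one.1 hk with hk | hk
  · simp [Nat.totient_eq_zero.1 hk] at hlt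
  · rcases Nat.totient_eq_one_iff.1 hk with rfl | rfl
    · simp at hlt
    · ring

end Nat

def closedTwinClass {V : Type*} (X : SimpleGraph V) (u : V) : Set V :=
  {w | closedNbhd X w = closedNbhd X u}

theorem closedTwinClass_congr {V : Type*} {X : SimpleGraph V} {a b : V}
    (h : closedNbhd X a = closedNbhd X b) : closedTwinClass X a = closedTwinClass X b := by
  rw [closedTwinClass, closedTwinClass, h]

section PowerGraph

variable {G : Type*} [Group G]

theorem IsCCGenerator.closedNbhd_powGraph_eq {v : G} (hcc : IsCCGenerator v) :
    closedNbhd (powGraph G) v = zpowers v := by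
  ext x
  simp only [closedNbhd, Set.mem_insert_iff, SimpleGraph.mem_neighborSet, SetLike.mem_coe]
  constructor
  · rintro (rfl | ⟨-, hvx | hxv⟩)
    · exact mem_zpowers x
    · exact hcc x hvx ▸ mem_zpowers x
    · exact hxv
  · intro hx
    by_cases hxv : x = v
    · exact Or.inl hxv
    · exact Or.inr ⟨Ne.symm hxv, Or.inr hx⟩

theorem IsCCGenerator.mem_closedNbhd_powGraph_iff {v g : G} (hcc : IsCCGenerator v) :
    g ∈ closedNbhd (powGraph G) v ↔ g ∈ zpowers v :=
  Set.ext_iff.1 hcc.closedNbhd_powGraph_eq g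

theorem mem_zpowers_pow_div_of_pow_eq_one {v a : G} (ha : a ∈ zpowers v) {m : ℕ}
    (hm : m ∣ orderOf v) (hm0 : m ≠ 0) (ham : a ^ m = 1) :
    a ∈ zpowers (v ^ (orderOf v / m)) := by
  obtain ⟨k, rfl⟩ := mem_zpowers_iff.1 ha
  have hk : ((orderOf v / m : ℕ) : ℤ) * m ∣ k * m := by
    rw [← Nat.cast_mul, Nat.div_mul_cancel hm, orderOf_dvd_iff_zpow_eq_one, zpow_mul, zpow_natCast,
      ham]
  obtain ⟨t, rfl⟩ := Int.dvd_of_mul_dvd_mul_right (by exact_mod_cast hm0) hk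
  exact ⟨t, by dsimp only; rw [zpow_mul, zpow_natCast]⟩

variable [Finite G]

theorem zpowers_eq_zpowers_pow_div_orderOf {v b : G} (hb : b ∈ zpowers v) :
    zpowers b = zpowers (v ^ (orderOf v / orderOf b)) := by
  have hbv := orderOf_dvd_of_mem_zpowers hb
  have hb0 := (orderOf_pos b).ne'
  refine eq_of_le_of_card_ge (zpowers_le.2 ?_) ?_
  · exact mem_zpowers_pow_div_of_pow_eq_one hb hbv hb0 (pow_orderOf_eq_one b)
  · rw [Nat.card_zpowers, Nat.card_zpowers, orderOf_pow_of_dvd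
      (Nat.div_ne_zero_iff_of_dvd hbv |>.2 ⟨(orderOf_pos v).ne', hb0⟩) (Nat.div_dvd_of_dvd hbv),
      Nat.div_div_self hbv (orderOf_pos v).ne']

theorem mem_zpowers_iff_orderOf_dvd_s7 {v a b : G} (ha : a ∈ zpowers v) (hb : b ∈ zpowers v) :
    a ∈ zpowers b ↔ orderOf a ∣ orderOf b := by
  refine ⟨orderOf_dvd_of_mem_zpowers, fun h => ?_⟩
  rw [zpowers_eq_zpowers_pow_div_orderOf hb]
  exact mem_zpowers_pow_div_of_pow_eq_one ha (orderOf_dvd_of_mem_zpowers hb) (orderOf_pos b).ne'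
    (orderOf_dvd_iff_pow_eq_one.1 h)

theorem ncard_orderOf_eq_inter_zpowers (v : G) {d : ℕ} (hd : d ∣ orderOf v) :
    ({g : G | orderOf g = d} ∩ zpowers v).ncard = φ d := by
  classical
  have : Fintype (zpowers v) := Fintype.ofFinite _
  have himage : {g : G | orderOf g = d} ∩ zpowers v =
      Subtype.val '' {a : zpowers v | orderOf a = d} := by
    ext g
    constructor
    · rintro ⟨hg, hgv⟩
      exact ⟨⟨g, hgv⟩, (orderOf_mk g hgv).trans hg, rfl⟩
    · rintro ⟨a, ha, rfl⟩
      exact ⟨(orderOf_coe a).trans ha, a.2⟩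
  rw [himage, Set.ncard_image_of_injective _ Subtype.val_injective, Set.ncard_eq_toFinset_card',
    Set.toFinset_ofPred, IsCyclic.card_orderOf_eq_totient]
  rwa [← Nat.card_eq_fintype_card, Nat.card_zpowers]

variable {v : G}

theorem IsCCGenerator.closedNbhd_powLocal (hcc : IsCCGenerator v)
    (a : closedNbhd (powGraph G) v) :
    closedNbhd (powLocal G v) a =
      {b : closedNbhd (powGraph G) v |
        orderOf (b : G) ∣ orderOf (a : G) ∨ orderOf (a : G) ∣ orderOf (b : G)} := by
  have hmem (c : closedNbhd (powGraph G) v) : (c : G) ∈ zpowers v :=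
    hcc.mem_closedNbhd_powGraph_iff.1 c.2
  ext b
  show b = a ∨ ((a : G) ≠ b ∧ ((a : G) ∈ zpowers (b : G) ∨ (b : G) ∈ zpowers (a : G))) ↔
    orderOf (b : G) ∣ orderOf (a : G) ∨ orderOf (a : G) ∣ orderOf (b : G)
  rw [mem_zpowers_iff_orderOf_dvd_s7 (hmem a) (hmem b), mem_zpowers_iff_orderOf_dvd_s7 (hmem b) (hmem a)]
  obtain rfl | hba := eq_or_ne b a
  · simp
  · simp [hba, Subtype.val_injective.ne hba.symm, or_comm]

theorem IsCCGenerator.exists_orderOf_eq (hcc : IsCCGenerator v) {m : ℕ} (hm : m ∣ orderOf v) :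
    ∃ c : closedNbhd (powGraph G) v, orderOf (c : G) = m := by
  have hv0 := (orderOf_pos v).ne'
  have hm0 : orderOf v / m ≠ 0 :=
    (Nat.div_ne_zero_iff_of_dvd hm).2 ⟨hv0, ne_zero_of_dvd_ne_zero hv0 hm⟩
  refine ⟨⟨v ^ (orderOf v / m), hcc.mem_closedNbhd_powGraph_iff.2 (pow_mem (mem_zpowers v) _)⟩,
    ?_⟩
  rw [orderOf_pow_of_dvd hm0 (Nat.div_dvd_of_dvd hm), Nat.div_div_self hm hv0]

theorem IsCCGenerator.ncard_orderOf_eq (hcc : IsCCGenerator v) {d : ℕ} (hd : d ∣ orderOf v) :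
    {w : closedNbhd (powGraph G) v | orderOf (w : G) = d}.ncard = φ d := by
  rw [← ncard_orderOf_eq_inter_zpowers v hd, ← hcc.closedNbhd_powGraph_eq]
  exact Set.ncard_subtype _ {g : G | orderOf g = d}

theorem IsCCGenerator.closedNbhd_powLocal_eq_iff (hcc : IsCCGenerator v)
    (a b : closedNbhd (powGraph G) v) :
    closedNbhd (powLocal G v) a = closedNbhd (powLocal G v) b ↔
      ∀ m, m ∣ orderOf v → ((m ∣ orderOf (a : G) ∨ orderOf (a : G) ∣ m) ↔
        (m ∣ orderOf (b : G) ∨ orderOf (b : G) ∣ m)) := by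
  rw [hcc.closedNbhd_powLocal, hcc.closedNbhd_powLocal]
  constructor
  · intro h m hm
    obtain ⟨c, rfl⟩ := hcc.exists_orderOf_eq hm
    exact Set.ext_iff.1 h c
  · intro h
    ext c
    exact h _ (orderOf_dvd_of_mem_zpowers (hcc.mem_closedNbhd_powGraph_iff.1 c.2))

theorem IsCCGenerator.closedNbhd_powLocal_eq_of_orderOf_eq (hcc : IsCCGenerator v)
    {a b : closedNbhd (powGraph G) v} (h : orderOf (a : G) = orderOf (b : G)) :
    closedNbhd (powLocal G v) a = closedNbhd (powLocal G v) b := by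
  rw [hcc.closedNbhd_powLocal, hcc.closedNbhd_powLocal, h]

theorem IsCCGenerator.closedNbhd_powLocal_eq_univ (hcc : IsCCGenerator v)
    {a : closedNbhd (powGraph G) v} (h : orderOf (a : G) = 1 ∨ orderOf (a : G) = orderOf v) :
    closedNbhd (powLocal G v) a = Set.univ := by
  rw [hcc.closedNbhd_powLocal, Set.eq_univ_iff_forall]
  intro b
  rcases h with h | h
  · exact Or.inr (h ▸ one_dvd _)
  · exact Or.inl (h ▸ orderOf_dvd_of_mem_zpowers (hcc.mem_closedNbhd_powGraph_iff.1 b.2))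

theorem IsCCGenerator.orderOf_of_totient_le_ncard_closedTwinClass (hcc : IsCCGenerator v)
    (hn : ¬IsPrimePow (orderOf v)) (u : closedNbhd (powGraph G) v)
    (hu : φ (orderOf v) ≤ (closedTwinClass (powLocal G v) u).ncard) :
    (orderOf (u : G) = 1 ∨ orderOf (u : G) = orderOf v) ∨ orderOf v = 2 * orderOf (u : G) := by
  have hdvd (w : closedNbhd (powGraph G) v) : orderOf (w : G) ∣ orderOf v :=
    orderOf_dvd_of_mem_zpowers (hcc.mem_closedNbhd_powGraph_iff.1 w.2)
  by_contra! h
  obtain ⟨⟨hu1, hun⟩, hu2⟩ := h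
  have hclass : closedTwinClass (powLocal G v) u ⊆ {w | orderOf (w : G) = orderOf (u : G)} :=
    fun w hw => (Nat.eq_of_forall_dvd_iff hn (orderOf_pos v).ne' (hdvd u) (hdvd w) hu1 hun
      ((hcc.closedNbhd_powLocal_eq_iff u w).1 hw.symm)).symm
  have hlt : orderOf (u : G) < orderOf v :=
    lt_of_le_of_ne (Nat.le_of_dvd (orderOf_pos v) (hdvd u)) hun
  refine hu2 (Nat.eq_two_mul_of_totient_le (hdvd u) hlt ?_)
  calc φ (orderOf v) ≤ (closedTwinClass (powLocal G v) u).ncard := hu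
    _ ≤ {w : closedNbhd (powGraph G) v | orderOf (w : G) = orderOf (u : G)}.ncard :=
      Set.ncard_le_ncard hclass
    _ = φ (orderOf (u : G)) := hcc.ncard_orderOf_eq (hdvd u)

end PowerGraph

/-- For a CC-generator `v` whose order is not a prime power, `Γ_v` has at most two
closed-twin-classes of size at least `φ(o(v))`. -/
theorem at_most_two_large_twin_classes
    {G : Type*} [Group G] [Finite G] (v : G)
    (hcc : IsCCGenerator v)
    (hnpp : ¬ ∃ p i : ℕ, p.Prime ∧ orderOf v = p ^ i) :
    {S : Set (closedNbhd (powGraph G) v) |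
        (∃ u : closedNbhd (powGraph G) v,
          S = {w : closedNbhd (powGraph G) v |
            closedNbhd (powLocal G v) w = closedNbhd (powLocal G v) u}) ∧
        Nat.totient (orderOf v) ≤ S.ncard}.ncard ≤ 2 := by
  have hn : ¬IsPrimePow (orderOf v) := fun h => by
    obtain ⟨p, k, hp, -, hpk⟩ := (isPrimePow_nat_iff _).1 h
    exact hnpp ⟨p, k, hp, hpk.symm⟩
  let top : closedNbhd (powGraph G) v := ⟨v, self_mem_closedNbhd _ v⟩
  let sq : closedNbhd (powGraph G) v :=
    ⟨v ^ 2, hcc.mem_closedNbhd_powGraph_iff.2 (pow_mem (mem_zpowers v) 2)⟩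
  refine (Set.ncard_le_ncard (t := {closedTwinClass (powLocal G v) top,
    closedTwinClass (powLocal G v) sq}) ?_ (Set.toFinite _)).trans
    ((Set.ncard_insert_le _ _).trans (by simp))
  rintro _ ⟨⟨u, rfl⟩, hu⟩
  rcases hcc.orderOf_of_totient_le_ncard_closedTwinClass hn u hu with h | h
  · left
    exact closedTwinClass_congr ((hcc.closedNbhd_powLocal_eq_univ h).trans
      (hcc.closedNbhd_powLocal_eq_univ (Or.inr rfl)).symm)
  · right
    refine closedTwinClass_congr (hcc.closedNbhd_powLocal_eq_of_orderOf_eq ?_)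
    rw [orderOf_pow_of_dvd two_ne_zero ⟨_, h⟩, h, Nat.mul_div_cancel_left _ two_pos]
end

section
/- Let G be a finite group. The power graph Pow(G) is a complete graph (every two distinct elements of G are adjacent) if and only if G is a cyclic group of prime power order, i.e. G is cyclic and there is a prime p such that G is a p-group. -/
open Subgroup

section

variable {G : Type*} [Group G]

theorem forall_powGraph_adj_iff :
    (∀ x y : G, x ≠ y → (powGraph G).Adj x y) ↔ ∀ x y : G, x ∈ zpowers y ∨ y ∈ zpowers x := by
  refine ⟨fun h x y => ?_, fun h x y hxy => ⟨hxy, h x y⟩⟩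
  by_cases hxy : x = y
  · exact .inl (hxy ▸ mem_zpowers x)
  · exact (h x y hxy).2

theorem isCyclic_of_forall_mem_zpowers_or [Finite G]
    (h : ∀ x y : G, x ∈ zpowers y ∨ y ∈ zpowers x) : IsCyclic G := by
  obtain ⟨g, hg⟩ := Finite.exists_max (orderOf : G → ℕ)
  refine ⟨g, fun y => ?_⟩
  rcases h y g with hy | hg_mem
  · exact hy
  · have hle : zpowers g ≤ zpowers y := zpowers_le.mpr hg_mem
    have heq : zpowers g = zpowers y :=
      eq_of_le_of_card_ge hle (by simpa only [Nat.card_zpowers] using hg y)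
    exact heq.ge (mem_zpowers y)

theorem exists_isPGroup_of_prime_dvd_card_unique [Finite G]
    (h : ∀ q r : ℕ, q.Prime → r.Prime → q ∣ Nat.card G → r ∣ Nat.card G → q = r) :
    ∃ p : ℕ, p.Prime ∧ IsPGroup p G := by
  rcases eq_or_ne (Nat.card G) 1 with h1 | h1
  · exact ⟨2, Nat.prime_two, IsPGroup.of_card (n := 0) (by rw [h1, pow_zero])⟩
  · have hp := Nat.minFac_prime h1
    exact ⟨_, hp, IsPGroup.of_card <| Nat.eq_prime_pow_of_unique_prime_dvd Nat.card_pos.ne'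
      fun hq hqd => h _ _ hq hp hqd (Nat.minFac_dvd _)⟩

theorem exists_isPGroup_of_forall_mem_zpowers_or [Finite G]
    (h : ∀ x y : G, x ∈ zpowers y ∨ y ∈ zpowers x) : ∃ p : ℕ, p.Prime ∧ IsPGroup p G := by
  refine exists_isPGroup_of_prime_dvd_card_unique fun q r hq hr hqG hrG => ?_
  have := Fact.mk hq
  have := Fact.mk hr
  obtain ⟨x, hx⟩ := exists_prime_orderOf_dvd_card' q hqG
  obtain ⟨y, hy⟩ := exists_prime_orderOf_dvd_card' r hrG
  rcases h x y with hxy | hyx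
  · have hdvd := orderOf_dvd_of_mem_zpowers hxy
    rw [hx, hy] at hdvd
    exact (Nat.prime_dvd_prime_iff_eq hq hr).mp hdvd
  · have hdvd := orderOf_dvd_of_mem_zpowers hyx
    rw [hx, hy] at hdvd
    exact ((Nat.prime_dvd_prime_iff_eq hr hq).mp hdvd).symm

theorem IsCyclic.mem_zpowers_of_orderOf_dvd [Finite G] [IsCyclic G] {x y : G}
    (h : orderOf x ∣ orderOf y) : x ∈ zpowers y := by
  classical
  have := Fintype.ofFinite G
  -- `G` has at most `ord y` solutions of `a ^ ord y = 1`, and `⟨y⟩` already supplies that many.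
  let roots : Finset G := {a | a ^ orderOf y = 1}
  have hsub : (zpowers y : Set G).toFinset ⊆ roots := fun z hz => by
    simpa [roots] using orderOf_dvd_iff_pow_eq_one.mp
      (orderOf_dvd_of_mem_zpowers (Set.mem_toFinset.mp hz))
  have hcard : roots.card ≤ (zpowers y : Set G).toFinset.card := by
    rw [Set.toFinset_card, ← Nat.card_eq_fintype_card]
    exact (Nat.card_zpowers y).symm ▸ IsCyclic.card_pow_eq_one_le (orderOf_pos y)
  have hx : x ∈ roots := by simpa [roots] using orderOf_dvd_iff_pow_eq_one.mp h
  rw [← Finset.eq_of_subset_of_card_le hsub hcard] at hx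
  exact Set.mem_toFinset.mp hx

theorem IsPGroup.mem_zpowers_or_of_isCyclic [Finite G] [IsCyclic G] {p : ℕ} (hp : p.Prime)
    (hG : IsPGroup p G) (x y : G) : x ∈ zpowers y ∨ y ∈ zpowers x := by
  have := Fact.mk hp
  obtain ⟨a, ha⟩ := IsPGroup.iff_orderOf.mp hG x
  obtain ⟨b, hb⟩ := IsPGroup.iff_orderOf.mp hG y
  rcases le_total a b with hab | hba
  · exact .inl (IsCyclic.mem_zpowers_of_orderOf_dvd (ha ▸ hb ▸ pow_dvd_pow p hab))
  · exact .inr (IsCyclic.mem_zpowers_of_orderOf_dvd (ha ▸ hb ▸ pow_dvd_pow p hba))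

end

/-- The power graph of a finite group `G` is complete iff `G` is cyclic of prime power
order. -/
theorem powGraph_complete_iff_cyclic_primePower
    {G : Type*} [Group G] [Finite G] :
    (∀ x y : G, x ≠ y → (powGraph G).Adj x y) ↔
      (IsCyclic G ∧ ∃ p : ℕ, p.Prime ∧ IsPGroup p G) := by
  rw [forall_powGraph_adj_iff]
  refine ⟨fun h => ⟨isCyclic_of_forall_mem_zpowers_or h,
    exists_isPGroup_of_forall_mem_zpowers_or h⟩, ?_⟩
  rintro ⟨hcyc, p, hp, hG⟩
  exact hG.mem_zpowers_or_of_isCyclic hp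
end

section
/- Let G be a finite group and let v ∈ G be a CC-generator. Then for every u ∈ ⟨v⟩, the closed neighborhood of v in the enhanced power graph EPow(G) is contained in the closed neighborhood of u in EPow(G): N_{EPow(G)}[v] ⊆ N_{EPow(G)}[u]. -/
/-- The enhanced power graph of a group `G`: distinct `x` and `y` are adjacent iff
there is `z` with `x ∈ ⟨z⟩` and `y ∈ ⟨z⟩`. -/
def ePowGraph (G : Type*) [Group G] : SimpleGraph G where
  Adj x y := x ≠ y ∧ ∃ z : G, x ∈ Subgroup.zpowers z ∧ y ∈ Subgroup.zpowers z
  symm := by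
    constructor
    rintro x y ⟨hne, z, hx, hy⟩
    exact ⟨hne.symm, z, hy, hx⟩
  loopless := by
    constructor
    rintro x ⟨hne, -⟩
    exact hne rfl

theorem mem_closedNbhd_ePowGraph_iff {G : Type*} [Group G] {x y : G} :
    x ∈ closedNbhd (ePowGraph G) y ↔
      ∃ z : G, y ∈ Subgroup.zpowers z ∧ x ∈ Subgroup.zpowers z := by
  constructor
  · rintro (rfl | ⟨-, hz⟩)
    · exact ⟨x, Subgroup.mem_zpowers x, Subgroup.mem_zpowers x⟩
    · exact hz
  · rintro hz
    by_cases hxy : x = y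
    · exact hxy ▸ self_mem_closedNbhd _ _
    · exact Or.inr ⟨Ne.symm hxy, hz⟩

theorem closedNbhd_subset_in_ePowGraph_of_ccGenerator_general
    {G : Type*} [Group G] (v : G) (hcc : IsCCGenerator v) :
    ∀ u ∈ Subgroup.zpowers v,
      closedNbhd (ePowGraph G) v ⊆ closedNbhd (ePowGraph G) u := by
  intro u hu x hx
  obtain ⟨z, hvz, hxz⟩ := mem_closedNbhd_ePowGraph_iff.mp hx
  exact mem_closedNbhd_ePowGraph_iff.mpr ⟨z, hcc z hvz ▸ hu, hxz⟩

/-- If `v` is a CC-generator, then for every `u ∈ ⟨v⟩` the closed neighborhood of `v`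
in the enhanced power graph is contained in that of `u`. -/
theorem closedNbhd_subset_in_ePowGraph_of_ccGenerator
    {G : Type*} [Group G] [Finite G] (v : G) (hcc : IsCCGenerator v) :
    ∀ u ∈ Subgroup.zpowers v,
      closedNbhd (ePowGraph G) v ⊆ closedNbhd (ePowGraph G) u :=
  closedNbhd_subset_in_ePowGraph_of_ccGenerator_general v hcc
end

section
/- Let p be a prime and G a finite p-group. Consider the simple graph T whose vertices are the cyclic subgroups of G, with C and C' adjacent iff (C < C' and |C'| = p·|C|) or (C' < C and |C| = p·|C'|). Then T is a tree (connected and acyclic). -/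
/-- The graph on the cyclic subgroups of `G`, with `C` and `C'` adjacent iff one is
properly contained in the other with index `p`. For a finite `p`-group this is (an
isomorphic copy of) the reduced graph `R₃(G)` of the directed power graph. -/
def cyclicSubgroupGraph (G : Type*) [Group G] (p : ℕ) :
    SimpleGraph {C : Subgroup G // ∃ g : G, C = Subgroup.zpowers g} where
  Adj C C' :=
    (C.1 < C'.1 ∧ Nat.card C'.1 = p * Nat.card C.1) ∨
    (C'.1 < C.1 ∧ Nat.card C.1 = p * Nat.card C'.1)
  symm := by
    refine ⟨?_⟩
    rintro C C' (h | h)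
    · exact Or.inr h
    · exact Or.inl h
  loopless := by
    refine ⟨?_⟩
    rintro C (h | h) <;> exact lt_irrefl _ h.1

/-
Rank cyclic subgroups by their order. A nontrivial cyclic subgroup `⟨g⟩` is adjacent to
the smaller `⟨g ^ p⟩`, so every vertex is joined to `⊥` by a descending path. A cyclic group
has at most one subgroup of each order, so each vertex has at most one smaller neighbour,
whereas a vertex of maximal order on a cycle would have two.
-/

namespace SimpleGraph

variable {V : Type*} {G : SimpleGraph V}

theorem reachable_of_forall_exists_adj_lt (f : V → ℕ) {r : V}
    (h : ∀ v, v ≠ r → ∃ w, G.Adj v w ∧ f w < f v) (v : V) : G.Reachable r v := by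
  induction hv : f v using Nat.strong_induction_on generalizing v with
  | _ n ih =>
    by_cases hvr : v = r
    · exact hvr ▸ Reachable.refl v
    · obtain ⟨w, hvw, hlt⟩ := h v hvr
      exact (ih (f w) (hv ▸ hlt) w rfl).trans hvw.reachable.symm

theorem isAcyclic_of_unique_adj_lt (f : V → ℕ) (hne : ∀ ⦃u v⦄, G.Adj u v → f u ≠ f v)
    (huniq : ∀ ⦃u v w⦄, G.Adj u v → G.Adj u w → f v < f u → f w < f u → v = w) :
    G.IsAcyclic := by
  classical
  intro v c hc
  obtain ⟨u, hu, hmax⟩ :=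
    Set.exists_max_image {w | w ∈ c.support} f c.support.finite_toSet ⟨v, c.start_mem_support⟩
  have hc' : (c.rotate u hu).IsCycle := hc.rotate hu
  have hnil : ¬ (c.rotate u hu).Nil := hc'.not_nil
  have hlt : ∀ w, G.Adj u w → w ∈ (c.rotate u hu).support → f w < f u := fun w huw hw =>
    lt_of_le_of_ne (hmax w ((c.mem_support_rotate_iff u hu).mp hw)) (hne huw).symm
  exact hc'.snd_ne_penultimate <| huniq (Walk.adj_snd hnil) (Walk.adj_penultimate hnil).symm
    (hlt _ (Walk.adj_snd hnil) (Walk.getVert_mem_support _ _))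
    (hlt _ (Walk.adj_penultimate hnil).symm (Walk.getVert_mem_support _ _))

end SimpleGraph

namespace Subgroup

theorem card_lt_of_lt {G : Type*} [Group G] {H K : Subgroup G} [Finite K] (h : H < K) :
    Nat.card H < Nat.card K :=
  (card_le_of_le h.le).lt_of_ne fun hcard => h.ne (eq_of_le_of_card_ge h.le hcard.ge)

variable {G : Type*} [Group G] [Finite G]

theorem eq_zpowers_pow_of_le_zpowers {g : G} {A : Subgroup G} (hA : A ≤ zpowers g) :
    A = zpowers (g ^ (orderOf g / Nat.card A)) := by
  set k := orderOf g / Nat.card A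
  have hdvd : Nat.card A ∣ orderOf g := Nat.card_zpowers g ▸ card_dvd_of_le hA
  have horder : orderOf g = Nat.card A * k := (Nat.mul_div_cancel' hdvd).symm
  have hk : k ≠ 0 := by
    rintro hk
    rw [hk, mul_zero] at horder
    exact (orderOf_pos g).ne' horder
  refine eq_of_le_of_card_ge (fun x hx => ?_) ?_
  · obtain ⟨m, rfl⟩ := mem_zpowers_iff.mp (hA hx)
    have hpow : (g ^ m) ^ Nat.card A = 1 := orderOf_dvd_iff_pow_eq_one.mp (A.orderOf_dvd_natCard hx)
    have : ((Nat.card A * k : ℕ) : ℤ) ∣ m * Nat.card A := by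
      rw [← horder, orderOf_dvd_iff_zpow_eq_one, zpow_mul, zpow_natCast, hpow]
    obtain ⟨t, rfl⟩ : (k : ℤ) ∣ m := by
      rw [Nat.cast_mul, mul_comm] at this
      exact (mul_dvd_mul_iff_right (by exact_mod_cast Nat.card_pos.ne')).mp this
    exact mem_zpowers_iff.mpr ⟨t, by rw [← zpow_natCast, ← zpow_mul]⟩
  · rw [Nat.card_zpowers, orderOf_pow_of_dvd hk (Dvd.intro_left _ horder.symm), horder,
      Nat.mul_div_cancel _ (Nat.pos_of_ne_zero hk)]

theorem eq_of_le_zpowers_of_card_eq {g : G} {A B : Subgroup G} (hA : A ≤ zpowers g)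
    (hB : B ≤ zpowers g) (hcard : Nat.card A = Nat.card B) : A = B := by
  rw [eq_zpowers_pow_of_le_zpowers hA, eq_zpowers_pow_of_le_zpowers hB, hcard]

end Subgroup

namespace cyclicSubgroupGraph

open Subgroup

variable {G : Type*} [Group G] [Finite G] {p : ℕ}
  {C D E : {C : Subgroup G // ∃ g : G, C = zpowers g}}

theorem card_ne_of_adj (h : (cyclicSubgroupGraph G p).Adj C D) : Nat.card C.1 ≠ Nat.card D.1 := by
  rcases h with ⟨h, -⟩ | ⟨h, -⟩
  · exact (card_lt_of_lt h).ne
  · exact (card_lt_of_lt h).ne'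

theorem lt_of_adj_of_card_lt (h : (cyclicSubgroupGraph G p).Adj C D)
    (hlt : Nat.card D.1 < Nat.card C.1) : D.1 < C.1 ∧ Nat.card C.1 = p * Nat.card D.1 := by
  rcases h with ⟨h, -⟩ | h
  · exact absurd (card_lt_of_lt h) hlt.asymm
  · exact h

theorem eq_of_adj_of_card_lt (hD : (cyclicSubgroupGraph G p).Adj C D)
    (hE : (cyclicSubgroupGraph G p).Adj C E) (hDC : Nat.card D.1 < Nat.card C.1)
    (hEC : Nat.card E.1 < Nat.card C.1) : D = E := by
  obtain ⟨hDlt, hDcard⟩ := lt_of_adj_of_card_lt hD hDC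
  obtain ⟨hElt, hEcard⟩ := lt_of_adj_of_card_lt hE hEC
  have hp : 0 < p := Nat.pos_of_mul_pos_right (hDcard ▸ Nat.card_pos)
  obtain ⟨g, hg⟩ := C.2
  exact Subtype.ext <| eq_of_le_zpowers_of_card_eq (hg ▸ hDlt.le) (hg ▸ hElt.le)
    (Nat.eq_of_mul_eq_mul_left hp (hDcard.symm.trans hEcard))

theorem exists_adj_card_lt (hp : p.Prime) (hG : IsPGroup p G) (hC : C.1 ≠ ⊥) :
    ∃ D, (cyclicSubgroupGraph G p).Adj C D ∧ Nat.card D.1 < Nat.card C.1 := by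
  have := Fact.mk hp
  obtain ⟨g, hg⟩ := C.2
  obtain ⟨k, hk⟩ := IsPGroup.iff_orderOf.mp hG g
  have hk0 : k ≠ 0 := by
    rintro rfl
    rw [pow_zero, orderOf_eq_one_iff] at hk
    exact hC (by rw [hg, hk, zpowers_one_eq_bot])
  have hpg : p ∣ orderOf g := hk ▸ dvd_pow_self p hk0
  let D : {C : Subgroup G // ∃ g : G, C = zpowers g} := ⟨zpowers (g ^ p), g ^ p, rfl⟩
  have hcard : Nat.card C.1 = p * Nat.card D.1 := by
    rw [hg, Nat.card_zpowers, Nat.card_zpowers, orderOf_pow_of_dvd hp.ne_zero hpg,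
      Nat.mul_div_cancel' hpg]
  have hle : D.1 ≤ C.1 := hg ▸ zpowers_le.mpr (pow_mem (mem_zpowers g) p)
  have hlt : Nat.card D.1 < Nat.card C.1 := hcard ▸ lt_mul_left Nat.card_pos hp.one_lt
  exact ⟨D, Or.inr ⟨hle.lt_of_ne fun h => hlt.ne (by rw [h]), hcard⟩, hlt⟩

end cyclicSubgroupGraph

/-- For a finite `p`-group `G`, the graph of cyclic subgroups with covering (index-`p`)
pairs as edges is a tree. -/
theorem cyclicSubgroupGraph_isTree_of_isPGroup
    {G : Type*} [Group G] [Finite G] (p : ℕ) (hp : p.Prime)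
    (hG : IsPGroup p G) :
    (cyclicSubgroupGraph G p).IsTree := by
  let root : {C : Subgroup G // ∃ g : G, C = Subgroup.zpowers g} :=
    ⟨⊥, 1, Subgroup.zpowers_one_eq_bot.symm⟩
  have hdescent (C) (hC : C ≠ root) :
      ∃ D, (cyclicSubgroupGraph G p).Adj C D ∧ Nat.card D.1 < Nat.card C.1 :=
    cyclicSubgroupGraph.exists_adj_card_lt hp hG fun h => hC (Subtype.ext h)
  exact ⟨(SimpleGraph.connected_iff_exists_forall_reachable _).mpr
      ⟨root, SimpleGraph.reachable_of_forall_exists_adj_lt (fun C => Nat.card C.1) hdescent⟩,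
    SimpleGraph.isAcyclic_of_unique_adj_lt (fun C => Nat.card C.1)
      (fun _ _ => cyclicSubgroupGraph.card_ne_of_adj)
      (fun _ _ _ => cyclicSubgroupGraph.eq_of_adj_of_card_lt)⟩
end

section
/- Let G₁ and G₂ be finite groups with gcd(|G₁|, |G₂|) = 1. Then for all x₁, y₁ ∈ G₁ and x₂, y₂ ∈ G₂: (y₁, y₂) ∈ ⟨(x₁, x₂)⟩ in G₁ × G₂ if and only if y₁ ∈ ⟨x₁⟩ and y₂ ∈ ⟨x₂⟩. (Equivalently, the directed power graph of G₁ × G₂ equals the strong product of the directed power graphs of G₁ and G₂.) -/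
/-- For finite groups of coprime orders, membership in a cyclic subgroup of the product
is componentwise: `(y₁, y₂) ∈ ⟨(x₁, x₂)⟩ ↔ y₁ ∈ ⟨x₁⟩ ∧ y₂ ∈ ⟨x₂⟩`. Equivalently, the
directed power graph of `G₁ × G₂` is the strong product of the directed power graphs. -/
theorem zpowers_prod_iff_of_coprime
    {G₁ G₂ : Type*} [Group G₁] [Group G₂] [Finite G₁] [Finite G₂]
    (h : Nat.Coprime (Nat.card G₁) (Nat.card G₂))
    (x₁ y₁ : G₁) (x₂ y₂ : G₂) :
    (y₁, y₂) ∈ Subgroup.zpowers (x₁, x₂) ↔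
      y₁ ∈ Subgroup.zpowers x₁ ∧ y₂ ∈ Subgroup.zpowers x₂ := by
  constructor
  · rintro ⟨k, hk⟩
    exact ⟨⟨k, congrArg Prod.fst hk⟩, ⟨k, congrArg Prod.snd hk⟩⟩
  · rintro ⟨h₁, h₂⟩
    rw [← mem_powers_iff_mem_zpowers] at h₁ h₂ ⊢
    obtain ⟨a, ha⟩ := h₁
    obtain ⟨b, hb⟩ := h₂
    have hcop : Nat.Coprime (orderOf x₁) (orderOf x₂) :=
      Nat.Coprime.coprime_dvd_left (orderOf_dvd_natCard x₁)
        (Nat.Coprime.coprime_dvd_right (orderOf_dvd_natCard x₂) h)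
    obtain ⟨m, hm₁, hm₂⟩ := Nat.chineseRemainder hcop a b
    refine ⟨m, ?_⟩
    have e₁ : x₁ ^ (m : ℕ) = x₁ ^ a := pow_eq_pow_iff_modEq.mpr hm₁
    have e₂ : x₂ ^ (m : ℕ) = x₂ ^ b := pow_eq_pow_iff_modEq.mpr hm₂
    simp only [Prod.pow_mk, e₁, e₂, ha, hb]
end

section
/- Let k ≥ 1 and let G₁, …, G_k and H₁, …, H_k be finite groups such that |G_i| = |H_i| for all i, and gcd(|G_i|, |G_j|) = 1 and gcd(|H_i|, |H_j|) = 1 for all i ≠ j. Let G = G₁ × ⋯ × G_k and H = H₁ × ⋯ × H_k. Then there exists a bijection F : G → H satisfying, for all x, y ∈ G, y ∈ ⟨x⟩ ⟺ F(y) ∈ ⟨F(x)⟩, if and only if for each i there exists a bijection f_i : G_i → H_i satisfying, for all x, y ∈ G_i, y ∈ ⟨x⟩ ⟺ f_i(y) ∈ ⟨f_i(x)⟩. (That is, DPow(G) ≅ DPow(H) iff DPow(G_i) ≅ DPow(H_i) for all i.) -/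
open Function Subgroup

/-! A directed-power-graph isomorphism preserves element orders. When the factors have pairwise
coprime orders, the copy of `G i` in `∏ j, G j` is exactly the set of elements whose order divides
`|G i|`, so an isomorphism of the products restricts to one of the factors. Conversely, by the
Chinese remainder theorem `y ∈ ⟨x⟩` holds in the product iff `y i ∈ ⟨x i⟩` for every `i`, so
componentwise isomorphisms assemble into one of the products. -/

/-- `F` is an isomorphism of directed power graphs `DPow(G) ≅ DPow(H)`. -/
def Equiv.IsDPowIso {G H : Type*} [Group G] [Group H] (F : G ≃ H) : Prop :=
  ∀ x y : G, y ∈ zpowers x ↔ F y ∈ zpowers (F x)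

theorem Equiv.exists_comp_eq_of_mem_range_iff {α β α' β' : Type*} (F : α ≃ β)
    {e₁ : α' → α} {e₂ : β' → β} (he₁ : Injective e₁) (he₂ : Injective e₂)
    (h : ∀ x, x ∈ Set.range e₁ ↔ F x ∈ Set.range e₂) :
    ∃ f : α' ≃ β', ∀ a, e₂ (f a) = F (e₁ a) :=
  ⟨(Equiv.ofInjective e₁ he₁).trans ((F.subtypeEquiv h).trans (Equiv.ofInjective e₂ he₂).symm),
    fun _ => Equiv.apply_ofInjective_symm he₂ _⟩

theorem MonoidHom.mem_zpowers_map_iff {G H : Type*} [Group G] [Group H] {e : G →* H}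
    (he : Injective e) {x y : G} : e y ∈ zpowers (e x) ↔ y ∈ zpowers x := by
  rw [← MonoidHom.map_zpowers, mem_map_iff_mem he]

section Pi

variable {ι : Type*} {G : ι → Type*} [∀ i, Group (G i)]

theorem mem_zpowers_pi_iff [Fintype ι] [∀ i, Finite (G i)] {x : ∀ i, G i}
    (hx : Pairwise (Nat.Coprime on fun i => orderOf (x i))) {y : ∀ i, G i} :
    y ∈ zpowers x ↔ ∀ i, y i ∈ zpowers (x i) := by
  refine ⟨fun ⟨n, hn⟩ i => ⟨n, congrFun hn i⟩, fun hy => ?_⟩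
  choose m hm using fun i => mem_powers_iff_mem_zpowers.2 (hy i)
  obtain ⟨n, hn⟩ := Nat.chineseRemainderOfFinset m (fun i => orderOf (x i)) Finset.univ
    (fun i _ => (orderOf_pos (x i)).ne') (fun i _ j _ hij => hx hij)
  refine mem_powers_iff_mem_zpowers.1 ⟨n, funext fun i => show x i ^ n = y i from ?_⟩
  rw [← hm i]
  exact pow_eq_pow_iff_modEq.2 (hn i (Finset.mem_univ i))

theorem mem_zpowers_pi_iff_of_coprime_card [Fintype ι] [∀ i, Finite (G i)]
    (hG : Pairwise (Nat.Coprime on fun i => Nat.card (G i))) {x y : ∀ i, G i} :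
    y ∈ zpowers x ↔ ∀ i, y i ∈ zpowers (x i) :=
  mem_zpowers_pi_iff fun _ _ hij =>
    (hG hij).coprime_dvd_left (orderOf_dvd_natCard _) |>.coprime_dvd_right (orderOf_dvd_natCard _)

theorem mem_range_mulSingle_iff_orderOf_dvd [DecidableEq ι]
    (hG : Pairwise (Nat.Coprime on fun i => Nat.card (G i))) (i : ι) (x : ∀ i, G i) :
    x ∈ Set.range (Pi.mulSingle i) ↔ orderOf x ∣ Nat.card (G i) := by
  constructor
  · rintro ⟨a, rfl⟩
    exact (orderOf_map_dvd (MonoidHom.mulSingle G i) a).trans (orderOf_dvd_natCard a)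
  · intro hx
    refine ⟨x i, funext fun j => ?_⟩
    rcases eq_or_ne j i with rfl | hj
    · exact Pi.mulSingle_eq_same j (x j)
    · have hxj : orderOf (x j) ∣ orderOf x := orderOf_map_dvd (Pi.evalMonoidHom G j) x
      rw [Pi.mulSingle_eq_of_ne hj, eq_comm, ← orderOf_eq_one_iff]
      exact Nat.eq_one_of_dvd_coprimes (hG hj) (orderOf_dvd_natCard _) (hxj.trans hx)

end Pi

namespace Equiv.IsDPowIso

variable {G H : Type*} [Group G] [Group H] {F : G ≃ H}

theorem orderOf_apply (hF : F.IsDPowIso) (x : G) : orderOf (F x) = orderOf x := by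
  rw [← Nat.card_zpowers, ← Nat.card_zpowers]
  exact Nat.card_congr (F.subtypeEquiv (hF x)).symm

theorem of_comp {G' H' : Type*} [Group G'] [Group H'] (hF : F.IsDPowIso)
    {e₁ : G' →* G} {e₂ : H' →* H} (he₁ : Injective e₁) (he₂ : Injective e₂) {f : G' ≃ H'}
    (hf : ∀ a, e₂ (f a) = F (e₁ a)) : f.IsDPowIso := by
  intro x y
  rw [← MonoidHom.mem_zpowers_map_iff he₁, hF, ← hf, ← hf, MonoidHom.mem_zpowers_map_iff he₂]

theorem piCongrRight {ι : Type*} [Fintype ι] {G H : ι → Type*} [∀ i, Group (G i)]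
    [∀ i, Finite (G i)] [∀ i, Group (H i)] [∀ i, Finite (H i)]
    (hG : Pairwise (Nat.Coprime on fun i => Nat.card (G i)))
    (hH : Pairwise (Nat.Coprime on fun i => Nat.card (H i)))
    {f : ∀ i, G i ≃ H i} (hf : ∀ i, (f i).IsDPowIso) : (Equiv.piCongrRight f).IsDPowIso := by
  intro x y
  rw [mem_zpowers_pi_iff_of_coprime_card hG, mem_zpowers_pi_iff_of_coprime_card hH]
  exact forall_congr' fun i => hf i (x i) (y i)

end Equiv.IsDPowIso

theorem dpow_iso_of_coprime_product_general
    {k : ℕ}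
    (G H : Fin k → Type*)
    [∀ i, Group (G i)] [∀ i, Finite (G i)]
    [∀ i, Group (H i)] [∀ i, Finite (H i)]
    (hcard : ∀ i, Nat.card (G i) = Nat.card (H i))
    (hG : ∀ i j, i ≠ j → Nat.Coprime (Nat.card (G i)) (Nat.card (G j)))
    (hH : ∀ i j, i ≠ j → Nat.Coprime (Nat.card (H i)) (Nat.card (H j))) :
    (∃ F : (∀ i, G i) ≃ (∀ i, H i),
        ∀ x y : ∀ i, G i, y ∈ Subgroup.zpowers x ↔ F y ∈ Subgroup.zpowers (F x)) ↔
      (∀ i, ∃ f : G i ≃ H i,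
        ∀ x y : G i, y ∈ Subgroup.zpowers x ↔ f y ∈ Subgroup.zpowers (f x)) := by
  have hG' : Pairwise (Nat.Coprime on fun i => Nat.card (G i)) := fun i j => hG i j
  have hH' : Pairwise (Nat.Coprime on fun i => Nat.card (H i)) := fun i j => hH i j
  constructor
  · rintro ⟨F, hF : F.IsDPowIso⟩ i
    obtain ⟨f, hf⟩ := F.exists_comp_eq_of_mem_range_iff (Pi.mulSingle_injective i)
      (Pi.mulSingle_injective i) fun x => by
        rw [mem_range_mulSingle_iff_orderOf_dvd hG', mem_range_mulSingle_iff_orderOf_dvd hH',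
          hF.orderOf_apply, hcard]
    exact ⟨f, hF.of_comp (e₁ := MonoidHom.mulSingle G i)
      (e₂ := MonoidHom.mulSingle H i) (Pi.mulSingle_injective i) (Pi.mulSingle_injective i) hf⟩
  · intro h
    choose f hf using h
    exact ⟨Equiv.piCongrRight f, Equiv.IsDPowIso.piCongrRight hG' hH' hf⟩

/-- For finite groups `G = G₁ × ⋯ × G_k` and `H = H₁ × ⋯ × H_k` with `|G_i| = |H_i|`
and pairwise coprime orders, the directed power graphs of `G` and `H` are isomorphic
iff the directed power graphs of `G_i` and `H_i` are isomorphic for every `i`. -/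
theorem dpow_iso_of_coprime_product
    {k : ℕ} (hk : 1 ≤ k)
    (G H : Fin k → Type*)
    [∀ i, Group (G i)] [∀ i, Finite (G i)]
    [∀ i, Group (H i)] [∀ i, Finite (H i)]
    (hcard : ∀ i, Nat.card (G i) = Nat.card (H i))
    (hG : ∀ i j, i ≠ j → Nat.Coprime (Nat.card (G i)) (Nat.card (G j)))
    (hH : ∀ i j, i ≠ j → Nat.Coprime (Nat.card (H i)) (Nat.card (H j))) :
    (∃ F : (∀ i, G i) ≃ (∀ i, H i),
        ∀ x y : ∀ i, G i, y ∈ Subgroup.zpowers x ↔ F y ∈ Subgroup.zpowers (F x)) ↔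
      (∀ i, ∃ f : G i ≃ H i,
        ∀ x y : G i, y ∈ Subgroup.zpowers x ↔ f y ∈ Subgroup.zpowers (f x)) :=
  dpow_iso_of_coprime_product_general G H hcard hG hH
end
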